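/- (Reweighted soft-threshold interpolates between soft and hard thresholding) Fix λ > 0 and define T_ω(a) = sign(a)·max{|a| − λ·(e^{−ω|a|}/e^{−ωλ}), 0} for ω ≥ 0. Then: (i) T_0(a) = sign(a)·max{|a| − λ, 0} is the soft-threshold; (ii) for every a with |a| > λ, T_ω(a) → a as ω → ∞; (iii) for every a with |a| < λ... T_ω(a) = 0 for all ω ≥ 0; so pointwise T_ω converges to the hard-threshold operator H_λ(a) = a·[|a| > λ] as ω → ∞. -/
import Mathlib

open Filter Topology

/-- The reweighted soft-threshold operator
`T_ω(a) = sign(a)·max(|a| - λ·e^{-ω|a|}/e^{-ωλ}, 0)`. -/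
noncomputable def rst (lam ω a : ℝ) : ℝ :=
  Real.sign a * max (|a| - lam * (Real.exp (-ω * |a|) / Real.exp (-ω * lam))) 0

/-- The reweighted soft-threshold interpolates between soft and hard thresholding:
(i) `T₀` is the soft-threshold; (ii) `T_ω(a) → a` as `ω → ∞` when `|a| > λ`;
(iii) `T_ω(a) = 0` for all `ω ≥ 0` when `|a| < λ`. -/
theorem rst_interpolation (lam : ℝ) (hlam : 0 < lam) :
    (∀ a, rst lam 0 a = Real.sign a * max (|a| - lam) 0) ∧
    (∀ a, lam < |a| → Tendsto (fun ω => rst lam ω a) atTop (𝓝 a)) ∧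
    (∀ a, |a| < lam → ∀ ω, 0 ≤ ω → rst lam ω a = 0) := by
  refine ⟨fun a => by simp [rst], fun a ha => ?_, fun a ha ω hω => ?_⟩
  · have h1 : Tendsto (fun ω : ℝ => Real.exp (-ω * |a|) / Real.exp (-ω * lam)) atTop (𝓝 0) := by
      have : ∀ ω : ℝ, Real.exp (-ω * |a|) / Real.exp (-ω * lam)
          = Real.exp (-(ω * (|a| - lam))) := by
        intro ω
        rw [← Real.exp_sub]
        ring_nf
      simp only [this]
      apply Real.tendsto_exp_atBot.comp
      apply tendsto_neg_atTop_atBot.comp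
      exact Tendsto.atTop_mul_const (by linarith) tendsto_id
    have h2 : Tendsto (fun ω : ℝ => rst lam ω a) atTop
        (𝓝 (Real.sign a * max (|a| - lam * 0) 0)) := by
      apply Tendsto.const_mul
      exact (tendsto_const_nhds.sub (tendsto_const_nhds.mul h1)).max tendsto_const_nhds
    have ha0 : a ≠ 0 := by
      intro h; rw [h] at ha; simp at ha; linarith
    have : Real.sign a * max (|a| - lam * 0) 0 = a := by
      rw [mul_zero, sub_zero, max_eq_left (abs_nonneg a)]
      rcases lt_or_gt_of_ne ha0 with h | h
      · rw [Real.sign_of_neg h, abs_of_neg h]; ring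
      · rw [Real.sign_of_pos h, abs_of_pos h]; ring
    rwa [this] at h2
  · have key : lam * (Real.exp (-ω * |a|) / Real.exp (-ω * lam)) ≥ lam := by
      have h1 : Real.exp (-ω * lam) ≤ Real.exp (-ω * |a|) := by
        apply Real.exp_le_exp.mpr
        nlinarith
      have h2 : 0 < Real.exp (-ω * lam) := Real.exp_pos _
      have : (1 : ℝ) ≤ Real.exp (-ω * |a|) / Real.exp (-ω * lam) :=
        (one_le_div h2).mpr h1
      nlinarith
    have : |a| - lam * (Real.exp (-ω * |a|) / Real.exp (-ω * lam)) ≤ 0 := by linarith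
    rw [rst, max_eq_right this, mul_zero]
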